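/- arXiv:2410.17522 — 7 statements merged into one kernel-verified Lean document; each statement's English description precedes it below -/
import Mathlib

section
/- For every positive integer n, the central Delannoy number satisfies D_n = ∑_{k=0}^{⌊n/2⌋} C(n,2k) C(2k,k) 3^{n-2k} 2^k, i.e. D_n equals the generalized central trinomial coefficient T_n(3,2). -/
def D (n : ℕ) : ℕ := ∑ k ∈ Finset.range (n + 1), n.choose k * (n + k).choose k

/-!
Both sides are the coefficient of `X ^ n` in `((X + 1) * (X + 2)) ^ n`. Writing
`(X + 2) ^ n = ((X + 1) + 1) ^ n` and expanding gives `∑ C(n,k) (X + 1) ^ (n + k)`, whose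
`X ^ n`-coefficient is `∑ C(n,k) C(n+k,k) = D n`. Writing `(X + 1) * (X + 2) = (X ^ 2 + 2) + 3 X`
and expanding gives the generalized central trinomial coefficient `T_n(3, 2)`.
-/

open Finset Polynomial

theorem Finset.sum_range_succ_ite_two_dvd {M : Type*} [AddCommMonoid M] (f : ℕ → M) (n : ℕ) :
    ∑ m ∈ range (n + 1), (if 2 ∣ m then f m else 0) = ∑ k ∈ range (n / 2 + 1), f (2 * k) := by
  rw [← sum_filter, ← sum_image (g := (2 * ·)) (by intro a _ b _ h; simpa using h)]
  congr 1
  ext m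
  simp only [mem_filter, mem_range, mem_image]
  constructor
  · rintro ⟨hm, k, rfl⟩
    exact ⟨k, by omega, rfl⟩
  · rintro ⟨k, hk, rfl⟩
    exact ⟨by omega, dvd_mul_right 2 k⟩

section CentralTrinomial

variable {R : Type*} [CommSemiring R]

def centralTrinomial (b c : R) (n : ℕ) : R :=
  ∑ k ∈ range (n / 2 + 1), n.choose (2 * k) * (2 * k).choose k * b ^ (n - 2 * k) * c ^ k

namespace Polynomial

theorem coeff_X_sq_add_C_pow (c : R) (m k : ℕ) :
    ((X ^ 2 + C c) ^ m).coeff k = if 2 ∣ k then c ^ (m - k / 2) * (m.choose (k / 2) : R) else 0 := by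
  have hexpand : (X ^ 2 + C c) ^ m = expand R 2 ((X + C c) ^ m) := by simp
  rw [hexpand, coeff_expand two_pos, coeff_X_add_C_pow]

theorem coeff_X_sq_add_C_mul_X_add_C_pow_self (b c : R) (n : ℕ) :
    ((X ^ 2 + C b * X + C c) ^ n).coeff n = centralTrinomial b c n := by
  have hsplit : X ^ 2 + C b * X + C c = (X ^ 2 + C c) + C b * X := by ring
  rw [hsplit, add_pow, finsetSum_coeff]
  calc _ = ∑ m ∈ range (n + 1), if 2 ∣ m then
          (n.choose m : R) * m.choose (m / 2) * b ^ (n - m) * c ^ (m - m / 2) else 0 :=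
        sum_congr rfl fun m hm => ?_
    _ = _ := by
        rw [sum_range_succ_ite_two_dvd]
        refine sum_congr rfl fun k _ => ?_
        rw [Nat.mul_div_cancel_left k two_pos, show 2 * k - k = k by omega]
  have hmn : m ≤ n := Nat.lt_succ_iff.mp (mem_range.mp hm)
  have hterm : (X ^ 2 + C c) ^ m * (C b * X) ^ (n - m) * (n.choose m : R[X]) =
      C (n.choose m * b ^ (n - m)) * (X ^ (n - m) * (X ^ 2 + C c) ^ m) := by
    simp only [mul_pow, ← C_pow, map_mul, map_natCast]
    ring
  rw [hterm, coeff_C_mul, coeff_X_pow_mul', if_pos (Nat.sub_le n m), Nat.sub_sub_self hmn,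
    coeff_X_sq_add_C_pow]
  split_ifs
  · ring
  · simp

end Polynomial

end CentralTrinomial

theorem D_eq_coeff (n : ℕ) : D n = (((X + 1) * (X + 2)) ^ n : ℕ[X]).coeff n := by
  have hexpand : ((X + 1) * (X + 2)) ^ n =
      ∑ k ∈ range (n + 1), (n.choose k : ℕ[X]) * (X + C 1) ^ (n + k) := by
    rw [mul_pow, show (X + 2 : ℕ[X]) = (X + 1) + 1 by ring, add_pow (X + 1 : ℕ[X]) 1, mul_sum]
    refine sum_congr rfl fun k _ => ?_
    simp only [one_pow, mul_one, map_one, pow_add]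
    ring
  simp only [D, hexpand, finsetSum_coeff, coeff_natCast_mul, coeff_X_add_C_pow, one_pow, one_mul,
    Nat.cast_id]
  exact sum_congr rfl fun k _ => by rw [Nat.choose_symm_add]

theorem stmt0_general (n : ℕ) :
    D n = ∑ k ∈ Finset.range (n / 2 + 1), n.choose (2 * k) * (2 * k).choose k * 3 ^ (n - 2 * k) * 2 ^ k := by
  have hfactor : (X + 1) * (X + 2) = (X ^ 2 + C 3 * X + C 2 : ℕ[X]) := by
    simp only [C_ofNat]
    ring
  rw [D_eq_coeff, hfactor, coeff_X_sq_add_C_mul_X_add_C_pow_self]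
  simp only [centralTrinomial, Nat.cast_id]

theorem stmt0 (n : ℕ) (hn : 0 < n) :
    D n = ∑ k ∈ Finset.range (n / 2 + 1), n.choose (2 * k) * (2 * k).choose k * 3 ^ (n - 2 * k) * 2 ^ k :=
  stmt0_general n
end

section
/- For any odd prime p, the little Schröder numbers satisfy s_p ≡ 2 (mod p) and s_{p+1} ≡ 3 (mod p). -/
def littleSchroeder (n : ℕ) : ℤ :=
  ∑ k ∈ Finset.Icc 1 n, ((n.choose k * n.choose (k - 1) / n * 2 ^ (n - k) : ℕ) : ℤ)

/-!
Every Narayana number `C(n,k) C(n,k-1) / n` with `1 < k < n` is divisible by `p` when `n = p`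
(both binomials are) and when `n = p + 1` (one binomial is, and `p` is prime to `p + 1`).
Modulo `p` only the terms `k = 1` and `k = n` of `s_n` survive, so `s_n ≡ 2^(n-1) + 1`,
and Fermat's little theorem gives `2^(p-1) ≡ 1`.
-/

open Finset

theorem Nat.dvd_choose_add_one_mul_choose (n k : ℕ) : n ∣ n.choose (k + 1) * n.choose k := by
  rcases lt_or_ge n (k + 1) with hlt | hle
  · simp [Nat.choose_eq_zero_of_lt hlt]
  obtain ⟨m, rfl⟩ : ∃ m, n = m + 1 := ⟨n - 1, by omega⟩
  set A := (m + 1).choose (k + 1) * (m + 1).choose k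
  have h_left : m + 1 ∣ A * (k + 1) :=
    ⟨m.choose k * (m + 1).choose k, by rw [mul_right_comm, ← Nat.add_one_mul_choose_eq]; ring⟩
  have h_right : m + 1 ∣ A * (m + 1 - k) :=
    ⟨(m + 1).choose (k + 1) * m.choose k, by rw [mul_assoc, ← Nat.choose_mul_succ_eq]; ring⟩
  -- `gcd(k + 1, m + 1 - k)` divides their sum `m + 2`, which is prime to `m + 1`.
  have h_gcd : (k + 1).gcd (m + 1 - k) ∣ m + 1 + 1 := by
    rw [show m + 1 + 1 = (k + 1) + (m + 1 - k) by omega]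
    exact Nat.dvd_add (Nat.gcd_dvd_left _ _) (Nat.gcd_dvd_right _ _)
  have h_cop : (m + 1).Coprime ((k + 1).gcd (m + 1 - k)) :=
    Nat.Coprime.coprime_dvd_right h_gcd (by simp)
  exact h_cop.dvd_of_dvd_mul_right (by rw [← Nat.gcd_mul_left]; exact Nat.dvd_gcd h_left h_right)

theorem Nat.Prime.dvd_add_one_choose {p k : ℕ} (hp : p.Prime) (hk₁ : 2 ≤ k) (hkp : k < p) :
    p ∣ (p + 1).choose k := by
  obtain ⟨j, rfl⟩ : ∃ j, k = j + 1 := ⟨k - 1, by omega⟩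
  rw [Nat.choose_succ_succ]
  exact Nat.dvd_add (hp.dvd_choose_self (by omega) (by omega))
    (hp.dvd_choose_self (by omega) (by omega))

theorem littleSchroeder_modEq_two_pow_add_one {n m : ℕ} (hn : 2 ≤ n)
    (h : ∀ k ∈ Ioo 1 n, m ∣ n.choose k * n.choose (k - 1) / n) :
    littleSchroeder n ≡ 2 ^ (n - 1) + 1 [ZMOD m] := by
  rw [← ZMod.intCast_eq_intCast_iff]
  have h_sub : ({1, n} : Finset ℕ) ⊆ Icc 1 n := by
    simp only [insert_subset_iff, singleton_subset_iff, mem_Icc]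
    omega
  have h_vanish : ∀ k ∈ Icc 1 n, k ∉ ({1, n} : Finset ℕ) →
      ((n.choose k * n.choose (k - 1) / n * 2 ^ (n - k) : ℕ) : ZMod m) = 0 := by
    intro k hk hk'
    simp only [mem_Icc, mem_insert, mem_singleton] at hk hk'
    rw [ZMod.natCast_eq_zero_iff]
    exact Dvd.dvd.mul_right (h k (mem_Ioo.mpr (by omega))) _
  have h_pos : 0 < n := by omega
  have h_choose : n.choose (n - 1) = n := by
    rw [← Nat.choose_symm_of_eq_add (show n = 1 + (n - 1) by omega), Nat.choose_one_right]
  rw [littleSchroeder, Int.cast_sum]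
  simp only [Int.cast_natCast]
  rw [← sum_subset h_sub h_vanish, sum_pair (by omega)]
  simp [h_choose, Nat.div_self h_pos]

theorem Nat.Prime.dvd_narayana_self {p k : ℕ} (hp : p.Prime) (hk : k ∈ Ioo 1 p) :
    p ∣ p.choose k * p.choose (k - 1) / p := by
  rw [mem_Ioo] at hk
  exact Nat.dvd_div_of_mul_dvd <|
    mul_dvd_mul (hp.dvd_choose_self (by omega) hk.2) (hp.dvd_choose_self (by omega) (by omega))

theorem Nat.Prime.dvd_narayana_add_one {p k : ℕ} (hp : p.Prime) (hp3 : 3 ≤ p)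
    (hk : k ∈ Ioo 1 (p + 1)) :
    p ∣ (p + 1).choose k * (p + 1).choose (k - 1) / (p + 1) := by
  rw [mem_Ioo] at hk
  have h_narayana : p + 1 ∣ (p + 1).choose k * (p + 1).choose (k - 1) := by
    simpa [Nat.sub_add_cancel (by omega : 1 ≤ k)] using
      Nat.dvd_choose_add_one_mul_choose (p + 1) (k - 1)
  have h_prime : p ∣ (p + 1).choose k * (p + 1).choose (k - 1) := by
    rcases lt_or_eq_of_le (Nat.le_of_lt_succ hk.2) with hkp | rfl
    · exact (hp.dvd_add_one_choose hk.1 hkp).mul_right _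
    · exact (hp.dvd_add_one_choose (by omega) (by omega)).mul_left _
  exact Nat.dvd_div_of_mul_dvd <|
    Nat.Coprime.mul_dvd_of_dvd_of_dvd (by simp) h_narayana h_prime

theorem stmt9 (p : ℕ) (hp : p.Prime) (hp2 : Odd p) :
    littleSchroeder p ≡ 2 [ZMOD p] ∧ littleSchroeder (p + 1) ≡ 3 [ZMOD p] := by
  have hp3 : 3 ≤ p := by
    obtain ⟨m, rfl⟩ := hp2
    have := hp.two_le
    omega
  have fermat : 2 ^ (p - 1) ≡ 1 [ZMOD p] :=
    Int.ModEq.pow_card_sub_one_eq_one hp (Int.isCoprime_iff_gcd_eq_one.mpr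
      (by simpa [Int.gcd] using Nat.coprime_two_left.mpr hp2))
  constructor
  · calc littleSchroeder p ≡ 2 ^ (p - 1) + 1 [ZMOD p] :=
          littleSchroeder_modEq_two_pow_add_one hp.two_le fun _ => hp.dvd_narayana_self
      _ ≡ 1 + 1 [ZMOD p] := fermat.add_right 1
  · calc littleSchroeder (p + 1) ≡ 2 ^ (p + 1 - 1) + 1 [ZMOD p] :=
          littleSchroeder_modEq_two_pow_add_one (by omega)
            fun _ => hp.dvd_narayana_add_one hp3
      _ = 2 * 2 ^ (p - 1) + 1 := by rw [← pow_succ', Nat.sub_add_cancel hp.one_le]; rfl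
      _ ≡ 2 * 1 + 1 [ZMOD p] := (fermat.mul_left 2).add_right 1
end

section
/- For any natural number j and any integer n > j, ∑_{k=j+1}^n (−1)^{n−k} k (k−j) C(k+j,2j) = (1/(2 C(2j,j))) C(n+j+1,j) C(n−1,j) n (n+1). -/
/-!
An alternating sum `S n = ∑_{k=j+1}^n (-1)^(n-k) a k` is the unique solution of
`S m + S (m + 1) = a (m + 1)`, `S j = 0`, so it suffices that the right-hand side satisfies this
recurrence with `a k = 2 C(2j, j) k (k - j) C(k + j, 2j)`. After `C(k + j, 2j) C(2j, j) = C(k + j, j) C(k, j)`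
the recurrence follows from three instances of `C(n, k) (n + 1) = C(n + 1, k) (n + 1 - k)`.
-/

open Finset

theorem sum_Icc_neg_one_pow_mul_eq {R : Type*} [CommRing R] {a g : ℕ → R} {j : ℕ}
    (hg : g j = 0) (hstep : ∀ m, j ≤ m → g m + g (m + 1) = a (m + 1)) {n : ℕ} (hn : j ≤ n) :
    ∑ k ∈ Icc (j + 1) n, (-1 : R) ^ (n - k) * a k = g n := by
  induction n, hn using Nat.le_induction with
  | base => simpa using hg.symm
  | succ n hjn ih =>
    have hshift : ∑ k ∈ Icc (j + 1) n, (-1 : R) ^ (n + 1 - k) * a k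
        = -∑ k ∈ Icc (j + 1) n, (-1 : R) ^ (n - k) * a k := by
      rw [← sum_neg_distrib]
      refine sum_congr rfl fun k hk => ?_
      rw [Nat.sub_add_comm (mem_Icc.1 hk).2, pow_succ]
      ring
    rw [sum_Icc_succ_top (by omega), hshift, ih, Nat.sub_self, pow_zero, one_mul,
      ← hstep n hjn]
    ring

theorem Int.choose_mul_succ_eq (n k : ℕ) :
    (n.choose k : ℤ) * (n + 1) = ((n + 1).choose k : ℤ) * (n + 1 - k) := by
  rcases le_or_gt k (n + 1) with hk | hk
  · have := congrArg ((↑) : ℕ → ℤ) (Nat.choose_mul_succ_eq n k)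
    push_cast [Nat.cast_sub hk] at this
    exact this
  · simp [Nat.choose_eq_zero_of_lt hk, Nat.choose_eq_zero_of_lt (by omega : n < k)]

theorem Int.choose_pred_mul_eq (n k : ℕ) :
    ((n - 1).choose k : ℤ) * n = (n.choose k : ℤ) * (n - k) := by
  cases n with
  | zero => cases k <;> simp
  | succ n => simpa using Int.choose_mul_succ_eq n k

theorem Int.choose_add_mul_choose_eq (n j : ℕ) :
    ((n + j).choose (2 * j) : ℤ) * ((2 * j).choose j) = ((n + j).choose j : ℤ) * (n.choose j) := by
  rcases le_or_gt j n with hj | hj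
  · have := Nat.choose_mul (n := n + j) (k := 2 * j) (s := j) (by omega)
    rw [show n + j - j = n by omega, show 2 * j - j = j by omega] at this
    exact_mod_cast this
  · simp [Nat.choose_eq_zero_of_lt hj, Nat.choose_eq_zero_of_lt (by omega : n + j < 2 * j)]

theorem choose_mul_choose_pred_add_succ (j m : ℕ) :
    ((m + j + 1).choose j : ℤ) * ((m - 1).choose j) * m * (m + 1)
      + ((m + j + 2).choose j : ℤ) * (m.choose j) * (m + 1) * (m + 2)
      = 2 * ((2 * j).choose j) * ((m + 1) * (m + 1 - j) * ((m + 1 + j).choose (2 * j))) := by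
  have hC := Int.choose_mul_succ_eq (m + j + 1) j
  have hA := Int.choose_mul_succ_eq m j
  have hB := Int.choose_pred_mul_eq m j
  have hD := Int.choose_add_mul_choose_eq (m + 1) j
  rw [show m + j + 1 + 1 = m + j + 2 by ring] at hC
  rw [show m + 1 + j = m + j + 1 by ring] at hD ⊢
  push_cast at hC hA hD
  linear_combination (m + 1 : ℤ) * (((m + j + 1).choose j : ℤ) * (hB + 2 * hA)
    - (m.choose j : ℤ) * hC - 2 * (m + 1 - j) * hD)

theorem stmt12 (j n : ℕ) (hn : j < n) :
    2 * ((2 * j).choose j : ℤ) *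
        ∑ k ∈ Finset.Icc (j + 1) n, (-1 : ℤ) ^ (n - k) * k * ((k : ℤ) - j) * ((k + j).choose (2 * j) : ℤ)
      = ((n + j + 1).choose j : ℤ) * ((n - 1).choose j : ℤ) * n * (n + 1) := by
  have htelescope := sum_Icc_neg_one_pow_mul_eq
    (g := fun m : ℕ => ((m + j + 1).choose j : ℤ) * ((m - 1).choose j) * m * (m + 1))
    (a := fun k : ℕ => 2 * ((2 * j).choose j : ℤ) * (k * (k - j) * ((k + j).choose (2 * j))))
    (by cases j <;> simp)
    (fun m _ => by
      rw [show m + 1 + j + 1 = m + j + 2 by ring]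
      push_cast
      linear_combination choose_mul_choose_pred_add_succ j m)
    hn.le
  rw [← htelescope, mul_sum]
  exact sum_congr rfl fun k _ => by ring
end

section
/- For any natural number j and any integer n > j, ∑_{k=j+1}^n (−1)^{n−k} (4k^2+2k−1) C(k+j,2j) (2j+1 − j(j+1)(2k+1)/(k(k+1))) = (1/C_j) · w(n,j+1) · n · ((4j+2)n + 4j+3), where w(n,k) = (1/k) C(n−1,k−1) C(n+k,k−1) and C_j = C(2j,j)/(j+1) is the Catalan number. -/
/-!
With `G n = closedForm j n = C(n+j+1, 2j) (n+1-j) (n-j) ((4j+2) n + 4j+3) / (n+1)`,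
the `k`-th summand `a k` satisfies `a (n+1) = G (n+1) + G n` (a rational-function identity once
`C(n+j+2, 2j)` is expressed through `C(n+j+1, 2j)`), and `G j = 0`, so the alternating sum
telescopes to `G n`.
The identity `C(n+j+1, 2j) C(2j, j) = C(n+j+1, j) C(n+1, j)` turns `G n` into the stated
right-hand side.
-/

open Finset

theorem Nat.cast_succ_choose_mul_sub {R : Type*} [CommRing R] (n k : ℕ) :
    ((n + 1).choose k : R) * (n + 1 - k) = n.choose k * (n + 1) := by
  rcases le_or_gt k (n + 1) with hk | hk
  · have h := congrArg (Nat.cast : ℕ → R) (Nat.choose_mul_succ_eq n k)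
    push_cast [Nat.cast_sub hk] at h
    exact h.symm
  · simp [Nat.choose_eq_zero_of_lt hk, Nat.choose_eq_zero_of_lt (show n < k by omega)]

theorem sum_Icc_neg_one_pow_mul_eq_of_add {R : Type*} [CommRing R] (a G : ℕ → R) (j : ℕ)
    (hG : G j = 0) (hstep : ∀ n, j ≤ n → a (n + 1) = G (n + 1) + G n) {n : ℕ} (hn : j ≤ n) :
    ∑ k ∈ Icc (j + 1) n, (-1 : R) ^ (n - k) * a k = G n := by
  induction n, hn using Nat.le_induction with
  | base => simp [hG]
  | succ n hn ih =>
    have hflip : ∀ k ∈ Icc (j + 1) n, (-1 : R) ^ (n + 1 - k) * a k = -((-1) ^ (n - k) * a k) := by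
      intro k hk
      rw [Nat.sub_add_comm (mem_Icc.mp hk).2, pow_succ]
      ring
    rw [sum_Icc_succ_top (by omega), sum_congr rfl hflip, sum_neg_distrib, ih, hstep n hn,
      Nat.sub_self, pow_zero]
    ring

namespace AltCatalanSum

def term (j k : ℕ) : ℚ :=
  (4 * k ^ 2 + 2 * k - 1) * ((k + j).choose (2 * j) : ℚ) *
    (2 * j + 1 - j * (j + 1) * (2 * k + 1) / (k * (k + 1)))

def closedForm (j n : ℕ) : ℚ :=
  ((n + j + 1).choose (2 * j) : ℚ) * (n + 1 - j) * (n - j) * ((4 * j + 2) * n + 4 * j + 3) /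
    (n + 1)

theorem closedForm_self (j : ℕ) : closedForm j j = 0 := by
  simp [closedForm]

theorem term_succ_eq (j n : ℕ) :
    term j (n + 1) = closedForm j (n + 1) + closedForm j n := by
  have hshift : ((n + j + 1 + 1).choose (2 * j) : ℚ) * (n + 2 - j)
      = (n + j + 1).choose (2 * j) * (n + j + 2) := by
    have h := Nat.cast_succ_choose_mul_sub (R := ℚ) (n + j + 1) (2 * j)
    push_cast at h
    linear_combination h
  unfold term closedForm
  rw [Nat.add_right_comm n 1 j]
  push_cast
  field_simp
  linear_combination -((n : ℚ) + 1 - j) * (n + 1) * ((n + 1) * (4 * j + 2) + 4 * j + 3) * hshift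

theorem catalan_form_eq_closedForm {j n : ℕ} (hn : j < n) :
    (1 / (catalan j : ℚ)) *
        ((1 / ((j : ℚ) + 1)) * ((n - 1).choose j : ℚ) * ((n + j + 1).choose j : ℚ)) *
        n * ((4 * j + 2) * n + 4 * j + 3) = closedForm j n := by
  obtain ⟨m, rfl⟩ : ∃ m, n = m + 1 := ⟨n - 1, by omega⟩
  have hcat : ((j : ℚ) + 1) * catalan j = (2 * j).choose j := by
    rw [← Nat.centralBinom_eq_two_mul_choose, ← succ_mul_catalan_eq_centralBinom]
    push_cast; ring
  have hprod : ((m + 1 + j + 1).choose (2 * j) : ℚ) * (2 * j).choose j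
      = (m + 1 + j + 1).choose j * (m + 2).choose j := by
    have h := Nat.choose_mul (n := m + 1 + j + 1) (k := 2 * j) (s := j) (by omega)
    rw [show m + 1 + j + 1 - j = m + 2 by omega, show 2 * j - j = j by omega] at h
    exact_mod_cast h
  have h₂ := Nat.cast_succ_choose_mul_sub (R := ℚ) (m + 1) j
  have h₁ := Nat.cast_succ_choose_mul_sub (R := ℚ) m j
  have hB : ((2 * j).choose j : ℚ) ≠ 0 := Nat.cast_ne_zero.mpr (Nat.choose_pos (by omega)).ne'
  have hC : (catalan j : ℚ) ≠ 0 := right_ne_zero_of_mul (hcat ▸ hB)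
  unfold closedForm
  rw [Nat.add_sub_cancel]
  push_cast at hprod h₁ h₂ ⊢
  field_simp
  linear_combination -(((m + 1 + j + 1).choose (2 * j) : ℚ) * (m + 2 - j) * (m + 1 - j) * hcat
    + ((m : ℚ) + 2 - j) * (m + 1 - j) * hprod
    + ((m + 1 + j + 1).choose j : ℚ) * (m + 1 - j) * h₂
    + ((m + 1 + j + 1).choose j : ℚ) * (m + 2) * h₁)

end AltCatalanSum

open AltCatalanSum in
theorem stmt13 (j n : ℕ) (hn : j < n) :
    ∑ k ∈ Finset.Icc (j + 1) n,
        (-1 : ℚ) ^ (n - k) * (4 * k ^ 2 + 2 * k - 1) * ((k + j).choose (2 * j) : ℚ) *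
          (2 * j + 1 - j * (j + 1) * (2 * k + 1) / (k * (k + 1)))
      = (1 / (catalan j : ℚ)) *
          ((1 / ((j : ℚ) + 1)) * ((n - 1).choose j : ℚ) * ((n + j + 1).choose j : ℚ)) *
          n * ((4 * j + 2) * n + 4 * j + 3) := by
  rw [catalan_form_eq_closedForm hn,
    ← sum_Icc_neg_one_pow_mul_eq_of_add (term j) (closedForm j) j (closedForm_self j)
      (fun n _ => term_succ_eq j n) hn.le]
  exact sum_congr rfl fun k _ => by unfold term; ring
end

section
/- For any prime p > 3, ∑_{j=0}^{p−2} C(2j,j) (−2)^j ≡ 1 (mod p), ∑_{j=0}^{p−2} C(2j+1,j+1) (−2)^j ≡ 0 (mod p), and 9 ∑_{j=0}^{p−2} j C(2j,j) (−2)^j ≡ −4 (mod p). -/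
/-!
Write `p = 2m + 1`. Comparing the recurrences `(k+1) C(2k+2,k+1) = 2(2k+1) C(2k,k)` and
`(k+1) C(m,k+1) = (m-k) C(m,k)`, and using `2(2k+1) ≡ -4(m-k)`, gives
`C(2k,k) ≡ (-4)^k C(m,k) (mod p)` for `k ≤ m`; for `m < k < p` both sides vanish. So
`C(2j,j) (-2)^j ≡ C(m,j) 8^j` for `j < p`, and the three sums become the binomial sum
`(1+8)^m = 3^(p-1) ≡ 1`, its shift (via `2 C(2j+1,j+1) = C(2j+2,j+1)`), and its derivative
`∑ j C(m,j) 8^j`, for which `9 ∑ j C(m,j) 8^j = 8m 9^m ≡ 8m ≡ -4`.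
-/

open Finset

theorem Nat.two_mul_choose_two_mul_add_one (n : ℕ) :
    2 * (2 * n + 1).choose (n + 1) = (2 * (n + 1)).choose (n + 1) := by
  rw [two_mul, Nat.choose_symm_half, mul_add_one, Nat.choose_succ_succ' _ n,
    Nat.choose_symm_half]

theorem Finset.sum_range_choose_mul_pow {R : Type*} [CommSemiring R] (x : R) {m N : ℕ}
    (h : m < N) : ∑ j ∈ range N, m.choose j * x ^ j = (1 + x) ^ m := by
  rw [add_comm, add_pow]
  refine (sum_subset (range_subset_range.2 h) fun j _ hj ↦ ?_).symm.trans
    (sum_congr rfl fun j _ ↦ by ring)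
  rw [Nat.choose_eq_zero_of_lt (by simpa using hj), Nat.cast_zero, zero_mul]

theorem Finset.sum_range_mul_choose_mul_pow {R : Type*} [CommSemiring R] (x : R) {m N : ℕ}
    (h : m < N) :
    (1 + x) * ∑ j ∈ range N, j * m.choose j * x ^ j = m * x * (1 + x) ^ m := by
  obtain _ | m := m
  · simp only [Nat.cast_zero, zero_mul]
    rw [sum_eq_zero fun j _ ↦ by cases j <;> simp, mul_zero]
  obtain ⟨N, rfl⟩ := Nat.exists_eq_add_one_of_ne_zero (by omega : N ≠ 0)
  have hterm (i : ℕ) : ((i + 1 : ℕ) : R) * (m + 1).choose (i + 1) * x ^ (i + 1) =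
      (m + 1) * x * (m.choose i * x ^ i) := by
    rw [← Nat.cast_mul, mul_comm (i + 1), ← Nat.add_one_mul_choose_eq]
    push_cast
    ring
  rw [sum_range_succ', Nat.cast_zero, zero_mul, zero_mul, add_zero,
    sum_congr rfl fun i _ ↦ hterm i, ← mul_sum, sum_range_choose_mul_pow x (by omega)]
  push_cast
  ring

namespace ZMod

theorem natCast_ne_zero_of_pos_of_lt {n a : ℕ} (ha : 0 < a) (han : a < n) : (a : ZMod n) ≠ 0 :=
  (natCast_eq_zero_iff a n).not.2 (Nat.not_dvd_of_pos_of_lt ha han)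

theorem two_mul_add_one_eq_zero {p m : ℕ} (hm : 2 * m + 1 = p) : (2 * m + 1 : ZMod p) = 0 := by
  exact_mod_cast (natCast_eq_zero_iff (2 * m + 1) p).2 (hm ▸ dvd_rfl)

variable {p m : ℕ} [Fact p.Prime]

theorem cast_choose_two_mul_self (hm : 2 * m + 1 = p) {k : ℕ} (hk : k ≤ m) :
    ((2 * k).choose k : ZMod p) = (-4) ^ k * m.choose k := by
  induction k with
  | zero => simp
  | succ k ih =>
    have hk1 : (k + 1 : ZMod p) ≠ 0 := by
      exact_mod_cast natCast_ne_zero_of_pos_of_lt k.succ_pos (by omega : k + 1 < p)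
    have hcentral : ((2 * (k + 1)).choose (k + 1) : ZMod p) * (k + 1) =
        2 * (2 * k + 1) * (2 * k).choose k := by
      have := Nat.succ_mul_centralBinom_succ k
      rw [Nat.centralBinom_eq_two_mul_choose, Nat.centralBinom_eq_two_mul_choose, mul_comm] at this
      exact_mod_cast congrArg (Nat.cast : ℕ → ZMod p) this
    have hchoose : (m.choose (k + 1) : ZMod p) * (k + 1) = m.choose k * (m - k) := by
      have := congrArg (Nat.cast : ℕ → ZMod p) (Nat.choose_succ_right_eq m k)
      push_cast [Nat.cast_sub (by omega : k ≤ m)] at this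
      exact this
    apply mul_right_cancel₀ hk1
    rw [hcentral, ih (by omega)]
    linear_combination
      -(-4) ^ (k + 1) * hchoose + 2 * (-4) ^ k * m.choose k * two_mul_add_one_eq_zero hm

theorem cast_choose_two_mul_self_mul_neg_two_pow (hm : 2 * m + 1 = p) {k : ℕ} (hk : k < p) :
    ((2 * k).choose k : ZMod p) * (-2) ^ k = m.choose k * 8 ^ k := by
  rcases le_or_gt k m with hkm | hmk
  · rw [cast_choose_two_mul_self hm hkm, show (8 : ZMod p) = -4 * -2 by norm_num, mul_pow]
    ring
  · have hdvd : p ∣ (2 * k).choose k := (Fact.out : p.Prime).dvd_choose hk (by omega) (by omega)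
    rw [(natCast_eq_zero_iff _ _).2 hdvd, Nat.choose_eq_zero_of_lt hmk]
    simp

theorem sum_choose_two_mul_self_mul_neg_two_pow (hm : 2 * m + 1 = p) :
    ∑ j ∈ range (2 * m), ((2 * j).choose j : ZMod p) * (-2) ^ j = 9 ^ m := by
  have hm0 : 0 < m := by have := (Fact.out : p.Prime).two_le; omega
  rw [sum_congr rfl fun j hj ↦ cast_choose_two_mul_self_mul_neg_two_pow hm (by simp at hj; omega),
    sum_range_choose_mul_pow 8 (by omega)]
  norm_num

theorem neg_four_mul_sum_choose_two_mul_add_one_mul_neg_two_pow (hm : 2 * m + 1 = p) :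
    -4 * ∑ j ∈ range (2 * m), ((2 * j + 1).choose (j + 1) : ZMod p) * (-2) ^ j = 9 ^ m - 1 := by
  have hterm (j : ℕ) (hj : j ∈ range (2 * m)) :
      -4 * (((2 * j + 1).choose (j + 1) : ZMod p) * (-2) ^ j) = m.choose (j + 1) * 8 ^ (j + 1) := by
    rw [← cast_choose_two_mul_self_mul_neg_two_pow hm (by simp at hj; omega),
      ← Nat.two_mul_choose_two_mul_add_one]
    push_cast
    ring
  have hsum := sum_range_choose_mul_pow (8 : ZMod p) (by omega : m < 2 * m + 1)
  rw [sum_range_succ'] at hsum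
  norm_num at hsum
  rw [mul_sum, sum_congr rfl hterm]
  linear_combination hsum

theorem nine_mul_sum_mul_choose_two_mul_self_mul_neg_two_pow (hm : 2 * m + 1 = p) :
    9 * ∑ j ∈ range (2 * m), (j : ZMod p) * (2 * j).choose j * (-2) ^ j = 8 * m * 9 ^ m := by
  have hm0 : 0 < m := by have := (Fact.out : p.Prime).two_le; omega
  have hterm (j : ℕ) (hj : j ∈ range (2 * m)) :
      (j : ZMod p) * (2 * j).choose j * (-2) ^ j = j * m.choose j * 8 ^ j := by
    rw [mul_assoc, cast_choose_two_mul_self_mul_neg_two_pow hm (by simp at hj; omega), mul_assoc]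
  have hsum := sum_range_mul_choose_mul_pow (8 : ZMod p) (by omega : m < 2 * m)
  norm_num at hsum
  rw [sum_congr rfl hterm]
  linear_combination hsum

end ZMod

theorem stmt16 (p : ℕ) (hp : p.Prime) (hp3 : 3 < p) :
    (∑ j ∈ Finset.range (p - 1), ((2 * j).choose j : ℤ) * (-2) ^ j ≡ 1 [ZMOD p]) ∧
    (∑ j ∈ Finset.range (p - 1), ((2 * j + 1).choose (j + 1) : ℤ) * (-2) ^ j ≡ 0 [ZMOD p]) ∧
    (9 * ∑ j ∈ Finset.range (p - 1), (j : ℤ) * ((2 * j).choose j : ℤ) * (-2) ^ j ≡ -4 [ZMOD p]) := by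
  have : Fact p.Prime := ⟨hp⟩
  obtain ⟨m, hm⟩ : ∃ m, 2 * m + 1 = p := (hp.odd_of_ne_two (by omega)).imp fun _ h ↦ h.symm
  have h9 : (9 : ZMod p) ^ m = 1 := by
    have h3 : (3 : ZMod p) ≠ 0 := by exact_mod_cast ZMod.natCast_ne_zero_of_pos_of_lt three_pos hp3
    rw [show (9 : ZMod p) = 3 ^ 2 by norm_num, ← pow_mul, show 2 * m = p - 1 by omega,
      ZMod.pow_card_sub_one_eq_one h3]
  have h4 : (-4 : ZMod p) ≠ 0 := by
    have h2 : (2 : ZMod p) ≠ 0 := by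
      exact_mod_cast ZMod.natCast_ne_zero_of_pos_of_lt two_pos (by omega : 2 < p)
    rw [show (-4 : ZMod p) = -(2 * 2) by norm_num]
    exact neg_ne_zero.2 (mul_ne_zero h2 h2)
  simp only [← ZMod.intCast_eq_intCast_iff, show p - 1 = 2 * m by omega]
  push_cast
  refine ⟨?_, ?_, ?_⟩
  · rw [ZMod.sum_choose_two_mul_self_mul_neg_two_pow hm, h9]
  · have hsum := ZMod.neg_four_mul_sum_choose_two_mul_add_one_mul_neg_two_pow hm
    rw [h9, sub_self] at hsum
    exact (mul_eq_zero.1 hsum).resolve_left h4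
  · rw [ZMod.nine_mul_sum_mul_choose_two_mul_self_mul_neg_two_pow hm, h9]
    linear_combination 4 * ZMod.two_mul_add_one_eq_zero hm
end

section
/- For every positive integer n, the polynomials s_{n+1}(x) − (1+2x) s_n(x) and s_n(x) − (1+2x) s_{n+1}(x) are each divisible by x^2 + x in ℤ[x]. -/
open Polynomial in
noncomputable def sPoly (n : ℕ) : Polynomial ℤ :=
  ∑ k ∈ Finset.Icc 1 n,
    Polynomial.C ((n.choose k * n.choose (k - 1) / n : ℕ) : ℤ) * X ^ (k - 1) * (X + 1) ^ (n - k)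

/-! Only the values at the roots `0` and `-1` of `X ^ 2 + X` matter: there every summand of
`s_n` but one vanishes, giving `s_n(0) = N(n,1) = 1` and `s_n(-1) = N(n,n) (-1)^(n-1) = (-1)^(n-1)`.
Both differences then vanish at `0` and `-1`, since `1 + 2X` takes the values `1` and `-1`. -/

open Polynomial

theorem Polynomial.X_sq_add_X_dvd {R : Type*} [CommRing R] {p : R[X]}
    (h₀ : p.eval 0 = 0) (h₁ : p.eval (-1) = 0) : (X ^ 2 + X : R[X]) ∣ p := by
  have hcop : IsCoprime (X : R[X]) (X - C (-1)) := ⟨-1, 1, by simp⟩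
  rw [show (X ^ 2 + X : R[X]) = X * (X - C (-1)) by simp; ring]
  refine hcop.mul_dvd ?_ ?_
  · rwa [X_dvd_iff, coeff_zero_eq_eval_zero]
  · rwa [dvd_iff_isRoot]

theorem Polynomial.X_sq_add_X_dvd_sub_one_add_two_X_mul {R : Type*} [CommRing R] {p q : R[X]}
    (h₀ : p.eval 0 = q.eval 0) (h₁ : p.eval (-1) = -q.eval (-1)) :
    (X ^ 2 + X : R[X]) ∣ p - (1 + 2 * X) * q := by
  apply X_sq_add_X_dvd
  · simp [h₀]
  · simp only [eval_sub, eval_mul, eval_add, eval_one, eval_ofNat, eval_X, h₁]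
    ring

theorem sPoly_eval_zero {n : ℕ} (hn : 0 < n) : (sPoly n).eval 0 = 1 := by
  rw [sPoly, eval_finsetSum, Finset.sum_eq_single_of_mem 1 (by simp [Nat.one_le_iff_ne_zero, hn.ne'])]
  · simp [Nat.div_self hn]
  · intro k hk hk1
    have : k - 1 ≠ 0 := by grind
    simp [zero_pow this]

theorem sPoly_succ_eval_neg_one (n : ℕ) : (sPoly (n + 1)).eval (-1) = (-1) ^ n := by
  rw [sPoly, eval_finsetSum, Finset.sum_eq_single_of_mem (n + 1) (by simp)]
  · simp [Nat.div_self n.succ_pos]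
  · intro k hk hkn
    have : n + 1 - k ≠ 0 := by grind
    simp [zero_pow this]

open Polynomial in
theorem stmt17 (n : ℕ) (hn : 0 < n) :
    (X ^ 2 + X : Polynomial ℤ) ∣ sPoly (n + 1) - (1 + 2 * X) * sPoly n ∧
    (X ^ 2 + X : Polynomial ℤ) ∣ sPoly n - (1 + 2 * X) * sPoly (n + 1) := by
  obtain ⟨m, rfl⟩ : ∃ m, n = m + 1 := ⟨n - 1, by omega⟩
  have h₀ : (sPoly (m + 1 + 1)).eval 0 = (sPoly (m + 1)).eval 0 := by
    rw [sPoly_eval_zero (by omega), sPoly_eval_zero (by omega)]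
  have h₁ : (sPoly (m + 1 + 1)).eval (-1) = -(sPoly (m + 1)).eval (-1) := by
    rw [sPoly_succ_eval_neg_one, sPoly_succ_eval_neg_one, pow_succ, mul_neg_one]
  refine ⟨X_sq_add_X_dvd_sub_one_add_two_X_mul h₀ h₁, X_sq_add_X_dvd_sub_one_add_two_X_mul h₀.symm ?_⟩
  rw [h₁, neg_neg]
end

section
/- For every even positive integer n, the polynomial (1+2x)(n+2) s_{n+1}(x)^2 + s_n(x) s_{n+1}(x) is divisible by (1+2x)^3 in ℤ[x]. -/
open Polynomial Finset

namespace LittleSchroder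

def narayana (n k : ℕ) : ℕ := n.choose k * n.choose (k - 1) / n

theorem dvd_choose_mul_choose_sub_one (n : ℕ) {k : ℕ} (hk : 1 ≤ k) :
    n ∣ n.choose k * n.choose (k - 1) := by
  obtain ⟨j, rfl⟩ := Nat.exists_eq_add_of_le' hk
  rcases n with _ | m
  · simp
  rw [Nat.add_sub_cancel]
  rcases lt_or_ge (m + 1) j with hj | hj
  · simp [Nat.choose_eq_zero_of_lt (by omega : m + 1 < j + 1)]
  have hcop : Nat.Coprime (m + 1) (m + 1 + 1) :=
    Nat.coprime_self_add_right.mpr (Nat.coprime_one_right _)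
  refine hcop.dvd_of_dvd_mul_left ?_
  have hleft : m + 1 ∣ (j + 1) * ((m + 1).choose (j + 1) * (m + 1).choose j) :=
    ⟨m.choose j * (m + 1).choose j, by
      rw [← mul_assoc, mul_comm (j + 1), ← Nat.add_one_mul_choose_eq]; ring⟩
  have hright : m + 1 ∣ (m + 1 - j) * ((m + 1).choose (j + 1) * (m + 1).choose j) :=
    ⟨m.choose j * (m + 1).choose (j + 1), by
      rw [mul_comm ((m + 1).choose (j + 1)), ← mul_assoc, mul_comm (m + 1 - j),
        ← Nat.choose_mul_succ_eq]; ring⟩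
  have := dvd_add hleft hright
  rwa [← add_mul, show j + 1 + (m + 1 - j) = m + 1 + 1 by omega] at this

theorem mul_narayana_succ (n k : ℕ) :
    n * narayana n (k + 1) = n.choose (k + 1) * n.choose k :=
  Nat.mul_div_cancel' (dvd_choose_mul_choose_sub_one n (Nat.le_add_left 1 k))

theorem narayana_zero_right {n : ℕ} (hn : 2 ≤ n) : narayana n 0 = 0 := by
  simp [narayana, Nat.div_eq_of_lt hn]

theorem narayana_self {n : ℕ} (hn : n ≠ 0) : narayana n n = 1 := by
  obtain ⟨m, rfl⟩ := Nat.exists_eq_add_one_of_ne_zero hn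
  simp [narayana]

theorem narayana_sub {n k : ℕ} (hk : k < n) : narayana n (n - k) = narayana n (k + 1) := by
  rw [narayana, narayana, Nat.choose_symm hk.le, Nat.sub_sub, Nat.choose_symm (by omega), mul_comm]
  rfl

theorem narayana_succ_left_mul {n k : ℕ} (hk : k ≤ n) :
    (narayana (n + 1) (k + 1) : ℤ) * ((n - k) * (n + 1 - k))
      = n * (n + 1) * narayana n (k + 1) := by
  have e1 := mul_narayana_succ (n + 1) k
  have e2 := mul_narayana_succ n k
  have r1 := Nat.choose_mul_succ_eq n (k + 1)
  have r2 := Nat.choose_mul_succ_eq n k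
  zify [show k + 1 ≤ n + 1 by omega, show k ≤ n + 1 by omega] at e1 e2 r1 r2
  apply mul_left_cancel₀ (show (n : ℤ) + 1 ≠ 0 by positivity)
  linear_combination (↑n - ↑k) * (↑n + 1 - ↑k) * e1
    - ((n + 1).choose k : ℤ) * (↑n + 1 - ↑k) * r1
    - (n.choose (k + 1) : ℤ) * (↑n + 1) * r2 - (↑n + 1) ^ 2 * e2

theorem narayana_mul_sub_mul {n k : ℕ} (hn : 2 ≤ n) (hk : k ≤ n) :
    (narayana n k : ℤ) * ((n + 1 - k) * (n - k)) = (k + 1) * k * narayana n (k + 1) := by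
  rcases k with _ | j
  · simp [narayana_zero_right hn]
  have e1 := mul_narayana_succ n j
  have e2 := mul_narayana_succ n (j + 1)
  have r1 := Nat.choose_succ_right_eq n j
  have r2 := Nat.choose_succ_right_eq n (j + 1)
  zify [show j ≤ n by omega, show j + 1 ≤ n by omega] at e1 e2 r1 r2
  apply mul_left_cancel₀ (show (n : ℤ) ≠ 0 by positivity)
  push_cast
  linear_combination (↑n - ↑j) * (↑n - ↑j - 1) * e1
    - (↑n - ↑j - 1) * (n.choose (j + 1) : ℤ) * r1
    - (↑j + 1) * (n.choose (j + 1) : ℤ) * r2 - (↑j + 2) * (↑j + 1) * e2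

theorem narayana_recurrence {n k : ℕ} (hn : 2 ≤ n) (hk : k < n) :
    (n + 2 : ℤ) * narayana (n + 1) (k + 1) + 2 * (n - 1 - 2 * k) * narayana n (k + 1)
      = (3 * n - 2 * k + 2) * narayana n k + (3 * n - 2 * k) * narayana n (k + 1) := by
  have hD : ((n : ℤ) - k) * (n + 1 - k) ≠ 0 := mul_ne_zero (by omega) (by omega)
  apply mul_left_cancel₀ hD
  linear_combination (n + 2 : ℤ) * narayana_succ_left_mul hk.le
    - (3 * n - 2 * k + 2 : ℤ) * narayana_mul_sub_mul hn hk.le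

theorem alternating_narayana_sum_identity {n : ℕ} (hn : 2 ≤ n) :
    (n + 2 : ℤ) * ∑ k ∈ range (n + 1), (-1) ^ k * (narayana (n + 1) (k + 1) : ℤ)
      + 2 * ∑ k ∈ range n, (-1) ^ k * ((n : ℤ) - 1 - 2 * k) * narayana n (k + 1) = 0 := by
  set F : ℕ → ℤ := fun k => (-1) ^ k * (3 * n - 2 * k + 2) * narayana n k
  have hterm : ∀ k ∈ range n,
      (n + 2 : ℤ) * ((-1) ^ k * narayana (n + 1) (k + 1))
        + 2 * ((-1) ^ k * ((n : ℤ) - 1 - 2 * k) * narayana n (k + 1)) = F k - F (k + 1) := by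
    intro k hk
    simp only [F]
    push_cast
    linear_combination (-1 : ℤ) ^ k * narayana_recurrence hn (mem_range.mp hk)
  rw [sum_range_succ, mul_add, mul_sum, mul_sum, add_right_comm, ← sum_add_distrib,
    sum_congr rfl hterm, sum_range_sub']
  simp only [F, narayana_zero_right hn, narayana_self (show n ≠ 0 by omega),
    narayana_self (show n + 1 ≠ 0 by omega)]
  push_cast
  ring

noncomputable def shiftedSchroder (n : ℕ) : ℤ[X] :=
  ∑ k ∈ range n, C (narayana n (k + 1) : ℤ) * (X - 1) ^ k * (X + 1) ^ (n - 1 - k)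

theorem sPoly_eq_sum_range (n : ℕ) :
    sPoly n = ∑ k ∈ range n, C (narayana n (k + 1) : ℤ) * X ^ k * (X + 1) ^ (n - 1 - k) := by
  change ∑ k ∈ Ico 1 (n + 1), _ = _
  rw [sum_Ico_eq_sum_range, Nat.add_sub_cancel]
  refine sum_congr rfl fun k _ => ?_
  rw [add_comm 1 k, Nat.add_sub_cancel, Nat.sub_sub, add_comm 1 k]
  rfl

theorem shiftedSchroder_comp (n : ℕ) :
    (shiftedSchroder n).comp (1 + 2 * X) = 2 ^ (n - 1) * sPoly n := by
  rw [shiftedSchroder, sPoly_eq_sum_range, mul_sum, Polynomial.sum_comp]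
  refine sum_congr rfl fun k hk => ?_
  have hX₁ : (1 + 2 * X - 1 : ℤ[X]) = 2 * X := by ring
  have hX₂ : (1 + 2 * X + 1 : ℤ[X]) = 2 * (X + 1) := by ring
  simp only [mul_comp, pow_comp, C_comp, sub_comp, add_comp, X_comp, one_comp, hX₁, hX₂,
    mul_pow]
  have h2 : (2 : ℤ[X]) ^ (n - 1) = 2 ^ k * 2 ^ (n - 1 - k) := by
    rw [← pow_add, Nat.add_sub_of_le (Nat.le_sub_one_of_lt (mem_range.mp hk))]
  rw [h2]
  ring

theorem shiftedSchroder_comp_neg_X (n : ℕ) :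
    (shiftedSchroder n).comp (-X) = (-1) ^ (n - 1) * shiftedSchroder n := by
  rw [shiftedSchroder, Polynomial.sum_comp, mul_sum, ← sum_range_reflect]
  refine sum_congr rfl fun k hk => ?_
  have hk := mem_range.mp hk
  have hsign : (-1 : ℤ[X]) ^ (n - 1) = (-1) ^ k * (-1) ^ (n - 1 - k) := by
    rw [← pow_add, Nat.add_sub_of_le (Nat.le_sub_one_of_lt hk)]
  rw [show n - 1 - k + 1 = n - k by omega, narayana_sub hk, show n - 1 - (n - 1 - k) = k by omega,
    hsign]
  have hX₁ : (-X - 1 : ℤ[X]) = -(X + 1) := by ring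
  have hX₂ : (-X + 1 : ℤ[X]) = -(X - 1) := by ring
  simp only [mul_comp, pow_comp, C_comp, sub_comp, add_comp, X_comp, one_comp, hX₁, hX₂]
  rw [neg_pow (X + 1 : ℤ[X]), neg_pow (X - 1 : ℤ[X])]
  ring

theorem coeff_eq_zero_of_comp_neg_X_eq {R : Type*} [CommRing R] [NoZeroDivisors R] [CharZero R]
    {p : R[X]} {m d : ℕ} (h : p.comp (-X) = (-1) ^ m * p) (hmd : Odd (m + d)) :
    p.coeff d = 0 := by
  have hd := congrArg (coeff · d) h
  simp only [← C_1, ← C_neg, ← C_pow, coeff_C_mul] at hd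
  rw [show (-X : R[X]) = C (-1) * X by simp, comp_C_mul_X_coeff] at hd
  refine self_eq_neg.mp ?_
  calc p.coeff d = p.coeff d * (-1) ^ d * (-1) ^ d := by rw [mul_assoc, ← mul_pow]; simp
    _ = (-1) ^ (m + d) * p.coeff d := by rw [hd, pow_add]; ring
    _ = -p.coeff d := by rw [hmd.neg_one_pow]; ring

theorem coeff_zero_X_sub_one_pow_mul_X_add_one_pow {R : Type*} [CommRing R] (a b : ℕ) :
    ((X - 1 : R[X]) ^ a * (X + 1) ^ b).coeff 0 = (-1) ^ a := by
  simp [coeff_zero_eq_eval_zero]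

theorem coeff_one_X_sub_one_pow_mul_X_add_one_pow {R : Type*} [CommRing R] (a b : ℕ) :
    ((X - 1 : R[X]) ^ a * (X + 1) ^ b).coeff 1 = (-1) ^ a * ((b : R) - a) := by
  rw [sub_eq_add_neg, ← C_1, ← C_neg, coeff_mul, Finset.Nat.antidiagonal_succ]
  simp only [coeff_X_add_C_pow]
  rcases a with _ | a
  · simp
  · simp
    ring

theorem coeff_zero_shiftedSchroder (n : ℕ) :
    (shiftedSchroder n).coeff 0 = ∑ k ∈ range n, (-1) ^ k * (narayana n (k + 1) : ℤ) := by
  rw [shiftedSchroder, finsetSum_coeff]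
  refine sum_congr rfl fun k _ => ?_
  rw [mul_assoc, coeff_C_mul, coeff_zero_X_sub_one_pow_mul_X_add_one_pow, mul_comm]

theorem coeff_one_shiftedSchroder (n : ℕ) :
    (shiftedSchroder n).coeff 1
      = ∑ k ∈ range n, (-1) ^ k * ((n : ℤ) - 1 - 2 * k) * narayana n (k + 1) := by
  rw [shiftedSchroder, finsetSum_coeff]
  refine sum_congr rfl fun k hk => ?_
  rw [mul_assoc, coeff_C_mul, coeff_one_X_sub_one_pow_mul_X_add_one_pow, Nat.sub_sub,
    Nat.cast_sub (by have := mem_range.mp hk; omega)]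
  push_cast
  ring

theorem X_pow_three_dvd_shiftedSchroder_combination {n : ℕ} (hn : 2 ≤ n) (he : Even n) :
    X ^ 3 ∣ C ((n : ℤ) + 2) * X * shiftedSchroder (n + 1) + 2 * shiftedSchroder n := by
  have hodd {d : ℕ} (hd : Even d) : (shiftedSchroder n).coeff d = 0 :=
    coeff_eq_zero_of_comp_neg_X_eq (shiftedSchroder_comp_neg_X n) (by
      rw [Nat.odd_iff]; rw [Nat.even_iff] at he hd; omega)
  have heven : (shiftedSchroder (n + 1)).coeff 1 = 0 :=
    coeff_eq_zero_of_comp_neg_X_eq (shiftedSchroder_comp_neg_X (n + 1)) (by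
      rw [Nat.odd_iff]; rw [Nat.even_iff] at he; omega)
  have hcoeff (d : ℕ) :
      (C ((n : ℤ) + 2) * X * shiftedSchroder (n + 1) + 2 * shiftedSchroder n).coeff (d + 1)
        = (n + 2) * (shiftedSchroder (n + 1)).coeff d + 2 * (shiftedSchroder n).coeff (d + 1) := by
    rw [coeff_add, mul_assoc, coeff_C_mul, coeff_X_mul, coeff_ofNat_mul]
  rw [X_pow_dvd_iff]
  intro d hd
  interval_cases d
  · rw [coeff_add, mul_assoc, coeff_C_mul, coeff_X_mul_zero, coeff_ofNat_mul, hodd ⟨0, rfl⟩]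
    ring
  · rw [hcoeff, coeff_zero_shiftedSchroder, coeff_one_shiftedSchroder]
    exact alternating_narayana_sum_identity hn
  · rw [hcoeff, heven, hodd ⟨1, rfl⟩]
    ring

end LittleSchroder

open LittleSchroder in
open Polynomial in
theorem stmt18 (n : ℕ) (hn : 0 < n) (he : Even n) :
    ((1 + 2 * X) ^ 3 : Polynomial ℤ) ∣
      (1 + 2 * X) * (n + 2 : ℤ) • sPoly (n + 1) ^ 2 + sPoly n * sPoly (n + 1) := by
  have hn2 : 2 ≤ n := by rw [Nat.even_iff] at he; omega
  have hcomp : (C ((n : ℤ) + 2) * X * shiftedSchroder (n + 1) + 2 * shiftedSchroder n).comp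
      (1 + 2 * X) = 2 ^ n * (C ((n : ℤ) + 2) * (1 + 2 * X) * sPoly (n + 1) + sPoly n) := by
    have h2 : (2 : ℤ[X]) ^ n = 2 * 2 ^ (n - 1) := by rw [← pow_succ', Nat.sub_add_cancel hn]
    simp only [add_comp, mul_comp, C_comp, X_comp, ofNat_comp, shiftedSchroder_comp,
      Nat.add_sub_cancel, h2]
    ring
  have hdvd :=
    map_dvd (compRingHom (1 + 2 * X)) (X_pow_three_dvd_shiftedSchroder_combination hn2 he)
  rw [coe_compRingHom_apply, coe_compRingHom_apply, X_pow_comp, hcomp] at hdvd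
  have hcop : IsCoprime (1 + 2 * X : ℤ[X]) 2 := ⟨1, -X, by ring⟩
  have hfactor : (1 + 2 * X) * (n + 2 : ℤ) • sPoly (n + 1) ^ 2 + sPoly n * sPoly (n + 1)
      = sPoly (n + 1) * (C ((n : ℤ) + 2) * (1 + 2 * X) * sPoly (n + 1) + sPoly n) := by
    rw [zsmul_eq_mul, ← C_eq_intCast]
    push_cast
    ring
  rw [hfactor]
  exact ((hcop.pow).dvd_of_dvd_mul_left hdvd).mul_left _
end
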